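/- arXiv:1902.02705 — 2 statements merged into one kernel-verified Lean document; each statement's English description precedes it below -/
import Mathlib

section
/- Let C be a permutation class and let π ∈ C|Av(21) be a permutation of length n ≥ 1. Then there exists a unique index i with 0 ≤ i ≤ n−1 such that: (a) the pattern of π on positions [0,i) lies in C ∪ {ε}; (b) the suffix is increasing, i.e. π(i) < π(i+1) < ⋯ < π(n−1); and (c) either i = 0 or π(i) < π(i−1). (This is the 'greedy gridding' of π, in which the increasing suffix is taken as long as possible.) -/
/-- A permutation of arbitrary length: a length `n` together with a bijection of `Fin n`. -/
abbrev Perm' := Σ n : ℕ, Equiv.Perm (Fin n)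

/-- `Contains π σ`: the permutation `σ` occurs as a (classical) pattern in `π`. -/
def Contains (π σ : Perm') : Prop :=
  ∃ f : Fin σ.1 → Fin π.1, StrictMono f ∧
    ∀ i j : Fin σ.1, σ.2 i < σ.2 j ↔ π.2 (f i) < π.2 (f j)

/-- The set of all permutations avoiding every member of `B`. -/
def Av (B : Set Perm') : Set Perm' := { π | ∀ σ ∈ B, ¬ Contains π σ }

/-- `C` is a permutation class: a set of permutations closed under containment. -/
def IsPermClass (C : Set Perm') : Prop :=
  ∀ π ∈ C, ∀ σ : Perm', Contains π σ → σ ∈ C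

/-- `σ` is the pattern of `π` on the window of positions `[a, b)`:
it has length `b - a` and is order-isomorphic to the word `π a, …, π (b-1)`. -/
def IsPatternOn (π : Perm') (a b : ℕ) (σ : Perm') : Prop :=
  ∃ (hb : b ≤ π.1) (hσ : σ.1 = b - a),
    ∀ i j : Fin σ.1,
      σ.2 i < σ.2 j ↔
        π.2 ⟨a + (i : ℕ), by have := i.isLt; omega⟩ <
          π.2 ⟨a + (j : ℕ), by have := j.isLt; omega⟩

/-- The pattern of `π` on positions `[a, b)` lies in the set `S`. -/
def PatternIn (π : Perm') (a b : ℕ) (S : Set Perm') : Prop :=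
  ∃ σ : Perm', IsPatternOn π a b σ ∧ σ ∈ S

/-- The set of empty permutations (there is exactly one, `ε`). -/
def emptyPerms : Set Perm' := { σ | σ.1 = 0 }

/-- The juxtaposition `C | D`. -/
def Juxt (C D : Set Perm') : Set Perm' :=
  { π | ∃ i : ℕ, i ≤ π.1 ∧ PatternIn π 0 i (C ∪ emptyPerms) ∧
      PatternIn π i π.1 (D ∪ emptyPerms) }

/-- The `k × 1` grid class `C_1 | C_2 | ⋯ | C_k`. -/
def GridClass {k : ℕ} (Cs : Fin k → Set Perm') : Set Perm' :=
  { π | ∃ ix : Fin (k + 1) → ℕ, Monotone ix ∧ ix 0 = 0 ∧ ix (Fin.last k) = π.1 ∧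
      ∀ j : Fin k, PatternIn π (ix j.castSucc) (ix j.succ) (Cs j ∪ emptyPerms) }

/-- The (ordinary) generating function of a set of permutations. -/
noncomputable def gf (S : Set Perm') : PowerSeries ℚ :=
  PowerSeries.mk fun n => (Set.ncard { π : Perm' | π ∈ S ∧ π.1 = n } : ℚ)

/-- `F` is algebraic: a root of a nonzero bivariate polynomial over `ℚ`. -/
def IsAlgebraicPS (F : PowerSeries ℚ) : Prop :=
  ∃ P : MvPolynomial (Fin 2) ℚ, P ≠ 0 ∧
    MvPolynomial.aeval ![(PowerSeries.X : PowerSeries ℚ), F] P = 0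

/-- `F` is rational: `Q · F = P` for polynomials `P, Q` with `Q(0) ≠ 0`. -/
def IsRationalPS (F : PowerSeries ℚ) : Prop :=
  ∃ P Q : Polynomial ℚ, Q.coeff 0 ≠ 0 ∧
    (Q : PowerSeries ℚ) * F = (P : PowerSeries ℚ)

/-- `π` is a simple permutation: every interval (a set of consecutive positions whose
image is a set of consecutive values) has size `0`, `1` or `π.1`. -/
def IsSimple (π : Perm') : Prop :=
  ∀ a b : ℕ, a ≤ b → b ≤ π.1 →
    (∃ c : ℕ, ∀ v : Fin π.1,
        (∃ i : Fin π.1, a ≤ (i : ℕ) ∧ (i : ℕ) < b ∧ π.2 i = v) ↔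
          (c ≤ (v : ℕ) ∧ (v : ℕ) < c + (b - a))) →
    b - a = 0 ∨ b - a = 1 ∨ b - a = π.1

/-- The reverse of a permutation: `π^r i = π (n - 1 - i)`. -/
def revP (π : Perm') : Perm' := ⟨π.1, (Fin.revPerm).trans π.2⟩

/-- The complement of a permutation: `π^c i = n - 1 - π i`. -/
def compP (π : Perm') : Perm' := ⟨π.1, π.2.trans Fin.revPerm⟩

/-- The reverse-complement of a permutation. -/
def revCompP (π : Perm') : Perm' := compP (revP π)

def revClass (C : Set Perm') : Set Perm' := revP '' C
def compClass (C : Set Perm') : Set Perm' := compP '' C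
def revCompClass (C : Set Perm') : Set Perm' := revCompP '' C

/-- The permutation `12`. -/
noncomputable def p12 : Perm' := ⟨2, Equiv.ofBijective ![0, 1] (by decide)⟩
/-- The permutation `21`. -/
noncomputable def p21 : Perm' := ⟨2, Equiv.ofBijective ![1, 0] (by decide)⟩
/-- The permutation `312`. -/
noncomputable def p312 : Perm' := ⟨3, Equiv.ofBijective ![2, 0, 1] (by decide)⟩
/-- The permutation `321`. -/
noncomputable def p321 : Perm' := ⟨3, Equiv.ofBijective ![2, 1, 0] (by decide)⟩
/-- The permutation `2413`. -/
noncomputable def p2413 : Perm' := ⟨4, Equiv.ofBijective ![1, 3, 0, 2] (by decide)⟩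
/-- The permutation `3142`. -/
noncomputable def p3142 : Perm' := ⟨4, Equiv.ofBijective ![2, 0, 3, 1] (by decide)⟩

/-! The set of indices `k` from which `π` is increasing is up-closed, contains `n - 1`, and
contains the split point `j` of the juxtaposition. Its least element `i` is the greedy gridding:
since `π` is increasing from `i - 1` iff `π (i - 1) < π i`, condition (c) says exactly that `i`
is least, and the pattern on `[0, i)` is contained in the `C`-pattern on `[0, j)`. -/

lemma exists_isPatternOn (π : Perm') (a : ℕ) {b : ℕ} (hb : b ≤ π.1) :
    ∃ σ : Perm', IsPatternOn π a b σ := by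
  let w : Fin (b - a) → Fin π.1 := fun i => π.2 ⟨a + i, by omega⟩
  have hw : Function.Injective w := fun i j h => by
    simpa [w, Fin.ext_iff] using π.2.injective h
  let e := Fintype.orderIsoFinOfCardEq (Set.range w)
    ((Set.card_range_of_injective hw).trans (Fintype.card_fin _))
  refine ⟨⟨b - a, (Equiv.ofInjective w hw).trans e.symm.toEquiv⟩, hb, rfl, fun i j => ?_⟩
  change e.symm _ < e.symm _ ↔ _
  rw [e.symm.lt_iff_lt]
  rfl

lemma IsPatternOn.contains {π σ τ : Perm'} {a b a' b' : ℕ} (hσ : IsPatternOn π a b σ)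
    (hτ : IsPatternOn π a' b' τ) (ha : a ≤ a') (hb : b' ≤ b) : Contains σ τ := by
  obtain ⟨_, hσl, hσo⟩ := hσ
  obtain ⟨_, hτl, hτo⟩ := hτ
  let f : Fin τ.1 → Fin σ.1 := fun k => ⟨a' - a + k, by omega⟩
  refine ⟨f, fun k l hkl => Fin.mk_lt_mk.2 (by simpa using hkl), fun k l => ?_⟩
  rw [hτo, hσo]
  simp only [f, show ∀ k : ℕ, a + (a' - a + k) = a' + k by omega]

lemma PatternIn.of_subwindow {π : Perm'} {C : Set Perm'} (hC : IsPermClass C) {a b a' b' : ℕ}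
    (h : PatternIn π a b (C ∪ emptyPerms)) (ha : a ≤ a') (hb : b' ≤ b) :
    PatternIn π a' b' (C ∪ emptyPerms) := by
  obtain ⟨σ, hσ, hσC⟩ := h
  obtain ⟨τ, hτ⟩ := exists_isPatternOn π a' (hb.trans hσ.1)
  refine ⟨τ, hτ, ?_⟩
  rcases hσC with hσC | hσε
  · exact .inl (hC σ hσC τ (hσ.contains hτ ha hb))
  · have : b - a = 0 := hσ.2.1 ▸ hσε
    exact .inr (show τ.1 = 0 by rw [hτ.2.1]; omega)

lemma strictMono_of_mem_av_p21 {σ : Perm'} (h : σ ∈ Av {p21}) : StrictMono σ.2 := by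
  intro i j hij
  by_contra hle
  have hji : σ.2 j < σ.2 i := (not_lt.1 hle).lt_of_ne (σ.2.injective.ne hij.ne')
  refine h p21 rfl ⟨![i, j], ?_, ?_⟩
  · show StrictMono (![i, j] : Fin 2 → Fin σ.1)
    simpa [Fin.strictMono_iff_lt_succ] using hij
  · change ∀ a b : Fin 2, _
    simp [Fin.forall_fin_two, hji, hji.not_gt]
    decide

def IncreasingFrom (π : Perm') (i : ℕ) : Prop :=
  ∀ a b : Fin π.1, i ≤ (a : ℕ) → a < b → π.2 a < π.2 b

lemma IsPatternOn.increasingFrom {π σ : Perm'} {a : ℕ} (h : IsPatternOn π a π.1 σ)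
    (hσ : StrictMono σ.2) : IncreasingFrom π a := by
  obtain ⟨_, hσl, hσo⟩ := h
  intro x y hx hxy
  have := hσo ⟨x - a, by omega⟩ ⟨y - a, by omega⟩
  simp only [show a + (x - a) = x by omega, show a + (y - a) = y by omega] at this
  exact this.1 (hσ (Fin.mk_lt_mk.2 (by omega)))

lemma PatternIn.increasingFrom_of_av_p21 {π : Perm'} {a : ℕ}
    (h : PatternIn π a π.1 (Av {p21} ∪ emptyPerms)) : IncreasingFrom π a := by
  obtain ⟨σ, hσ, hσ21 | hσε⟩ := h
  · exact hσ.increasingFrom (strictMono_of_mem_av_p21 hσ21)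
  · have hσ0 : σ.1 = 0 := hσε
    exact hσ.increasingFrom fun x _ _ => absurd x.2 (by omega)

lemma IncreasingFrom.mono {π : Perm'} {i i' : ℕ} (h : IncreasingFrom π i) (hii' : i ≤ i') :
    IncreasingFrom π i' :=
  fun a b ha => h a b (hii'.trans ha)

lemma increasingFrom_length_sub_one (π : Perm') : IncreasingFrom π (π.1 - 1) :=
  fun a b ha hab => absurd b.2 (by have : (a : ℕ) < b := hab; omega)

lemma IncreasingFrom.sub_one_iff {π : Perm'} {i : ℕ} (h : IncreasingFrom π i) (hi0 : 0 < i)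
    (hi : i < π.1) :
    IncreasingFrom π (i - 1) ↔ π.2 ⟨i - 1, by omega⟩ < π.2 ⟨i, hi⟩ := by
  refine ⟨fun h' => h' _ _ le_rfl (Fin.mk_lt_mk.2 (by omega)), fun hlt a b ha hab => ?_⟩
  rcases (show (a : ℕ) = i - 1 ∨ i ≤ a by omega) with ha | ha
  · rw [show a = ⟨i - 1, by omega⟩ from Fin.ext ha]
    rcases (show (b : ℕ) = i ∨ i < b by have : (a : ℕ) < b := hab; omega) with hb | hb
    · rwa [show b = ⟨i, hi⟩ from Fin.ext hb]
    · exact hlt.trans (h _ _ le_rfl hb)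
  · exact h a b ha hab

lemma isLeast_increasingFrom_iff {π : Perm'} {i : ℕ} (hi : i ≤ π.1 - 1) :
    IsLeast {k | IncreasingFrom π k} i ↔
      IncreasingFrom π i ∧
        (i = 0 ∨ ∀ h : i < π.1,
          π.2 ⟨i, h⟩ < π.2 ⟨i - 1, (i.sub_le 1).trans_lt h⟩) := by
  rcases Nat.eq_zero_or_pos i with rfl | hi0
  · exact ⟨fun h => ⟨h.1, .inl rfl⟩, fun h => ⟨h.1, fun k _ => Nat.zero_le k⟩⟩
  have hin : i < π.1 := by omega
  constructor
  · refine fun h => ⟨h.1, .inr fun _ => ?_⟩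
    by_contra hle
    have hlt : π.2 ⟨i - 1, by omega⟩ < π.2 ⟨i, hin⟩ :=
      (not_lt.1 hle).lt_of_ne (π.2.injective.ne (Fin.ne_of_val_ne (by simp; omega)))
    have := h.2 ((h.1.sub_one_iff hi0 hin).2 hlt)
    omega
  · rintro ⟨hinc, rfl | hdesc⟩
    · omega
    refine ⟨hinc, fun k hk => ?_⟩
    by_contra hki
    have hlt := (hinc.sub_one_iff hi0 hin).1 (hk.mono (by omega))
    exact (hdesc hin).asymm hlt

/-- the greedy gridding of a permutation in `C | Av(21)` exists and is
unique: a unique index `i` with `0 ≤ i ≤ n - 1` such that the pattern on `[0, i)` is in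
`C ∪ {ε}`, the suffix `π i < π (i+1) < ⋯ < π (n-1)` is increasing, and either `i = 0`
or `π i < π (i - 1)`. -/
theorem stmt0 (C : Set Perm') (hC : IsPermClass C) (π : Perm')
    (hπ : π ∈ Juxt C (Av {p21})) :
    ∃! i : ℕ, i ≤ π.1 - 1 ∧
      PatternIn π 0 i (C ∪ emptyPerms) ∧
      (∀ a b : Fin π.1, i ≤ (a : ℕ) → a < b → π.2 a < π.2 b) ∧
      (i = 0 ∨ ∀ h : i < π.1, π.2 ⟨i, h⟩ < π.2 ⟨i - 1, by omega⟩) := by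
  classical
  obtain ⟨j, -, hpre, hsuf⟩ := hπ
  have hj : IncreasingFrom π j := hsuf.increasingFrom_of_av_p21
  obtain ⟨i, hi⟩ : ∃ i, IsLeast {k | IncreasingFrom π k} i :=
    ⟨_, Nat.isLeast_find ⟨j, hj⟩⟩
  have hin : i ≤ π.1 - 1 := hi.2 (increasingFrom_length_sub_one π)
  refine ⟨i, ⟨hin, hpre.of_subwindow hC le_rfl (hi.2 hj),
    (isLeast_increasingFrom_iff hin).1 hi⟩, ?_⟩
  rintro i' ⟨hi'n, -, hi'⟩
  exact ((isLeast_increasingFrom_iff hi'n).2 hi').unique hi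
end

section
/- Let F ∈ ℚ[[z]] be the generating function of the grid class Av(21)|Av(21)|Av(21) (the set of permutations that can be split into three consecutive increasing segments). Then (1−z)³(1−2z)²(1−3z)·F = (1−z)²(1−2z)²(1−3z) + z²(1−z)(1−2z)(1−3z) + z³(1+z−4z²) in ℚ[[z]]; equivalently F = 1/(1−z) + z²/((1−z)²(1−2z)) + z³(1+z−4z²)/((1−z)³(1−2z)²(1−3z)). In particular F is rational. -/
/-!
A permutation `σ` of length `n` lies in `Av(21) | Av(21) | Av(21)` iff it fits some cut
`0 ≤ i ≤ j ≤ n`: it increases on each of the blocks `[0, i)`, `[i, j)`, `[j, n)`. Equivalently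
`p ↦ (block p, σ p)` is lexicographically increasing, or the descent set `D` of `σ` lies in
`{i, j}`.

Sorting `v ↦ (f v, v)` lexicographically shows that each colouring `f : [n] → {0, 1, 2}` is
`block ∘ σ⁻¹` for exactly one pair of a cut and a permutation fitting it. So these pairs number
`3 ^ n`, those with `j = n` number `2 ^ n` (colourings avoiding `2`), and only the identity fits the
cut `(n, n)`. For fixed `D ⊆ [0, n)`, counting the cuts compatible with `D` gives
`[D fits a cut] + n · #{i | D ⊆ {i, n}} = #{(i, j) | D ⊆ {i, j}} + C(n, 2) · [D ⊆ {n}]`,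
and summing over `σ` shows that the class has `3 ^ n - n 2 ^ n + C(n, 2)` members of length `n`.
These three terms have the generating functions `1 / (1 - 3z)`, `2z / (1 - 2z) ^ 2` and
`z ^ 2 / (1 - z) ^ 3`.
-/

open Finset

section Order

theorem existsUnique_perm_strictMono_toLex {α : Type*} [LinearOrder α] {n : ℕ} (f : Fin n → α) :
    ∃! σ : Equiv.Perm (Fin n), StrictMono fun p => toLex (f (σ p), σ p) := by
  set key : Fin n → α ×ₗ Fin n := fun v => toLex (f v, v)
  have key_inj : Function.Injective key := fun v w h => congrArg (fun x => (ofLex x).2) h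
  set s := univ.image key
  have hs : #s = n := by rw [card_image_of_injective _ key_inj, card_univ, Fintype.card_fin]
  set e := s.orderEmbOfFin hs
  have he : ∀ p, key (ofLex (e p)).2 = e p := by
    intro p
    obtain ⟨v, -, hv⟩ := mem_image.1 (s.orderEmbOfFin_mem hs p)
    rw [← hv]
    rfl
  have hinj : Function.Injective fun p => (ofLex (e p)).2 := by
    intro p q h
    exact e.injective (by rw [← he p, ← he q]; exact congrArg key h)
  refine ⟨Equiv.ofBijective _ hinj.bijective_of_finite, ?_, ?_⟩
  · intro p q hpq
    exact (he p).trans_lt ((e.strictMono hpq).trans_eq (he q).symm)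
  · intro τ hτ
    have hτe : (fun p => key (τ p)) = e :=
      s.orderEmbOfFin_unique hs (fun p => mem_image_of_mem _ (mem_univ _)) hτ
    ext p
    exact congrArg (fun x => ((ofLex x).2 : ℕ)) (congrFun hτe p)

variable {ι β γ : Type*} [PartialOrder ι] [PartialOrder β] [Preorder γ]

theorem monotone_of_strictMono_toLex {b : ι → β} {g : ι → γ}
    (H : StrictMono fun p => toLex (b p, g p)) : Monotone b :=
  monotone_iff_forall_lt.2 fun _ _ hpq => (Prod.Lex.toLex_lt_toLex'.1 (H hpq)).1

theorem strictMono_toLex_iff_forall_strictMonoOn {b : ι → β} (hb : Monotone b) {g : ι → γ} :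
    (StrictMono fun p => toLex (b p, g p)) ↔ ∀ k, StrictMonoOn g (b ⁻¹' {k}) := by
  simp only [StrictMono, Prod.Lex.toLex_lt_toLex']
  constructor
  · intro h k p (hp : b p = k) q (hq : b q = k) hpq
    exact (h hpq).2 (hp.trans hq.symm)
  · intro h p q hpq
    exact ⟨hb hpq.le, fun hbpq => h (b q) hbpq rfl hpq⟩

end Order

section Fin

variable {n : ℕ}

theorem Fin.strictMono_iff_lt_of_val_eq_succ {β : Type*} [Preorder β] {g : Fin n → β} :
    StrictMono g ↔ ∀ p q : Fin n, (q : ℕ) = p + 1 → g p < g q := by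
  cases n with
  | zero => exact ⟨fun _ p => p.elim0, fun _ p => p.elim0⟩
  | succ m =>
    rw [Fin.strictMono_iff_lt_succ]
    refine ⟨fun h p q hq => ?_, fun h p => h _ _ (by simp)⟩
    have hp : (p : ℕ) < m := by omega
    convert h ⟨p, hp⟩ <;> ext <;> simp [hq]

theorem Monotone.lt_iff_lt_card_filter {β : Type*} [LinearOrder β] {g : Fin n → β}
    (hg : Monotone g) (c : β) (p : Fin n) : g p < c ↔ (p : ℕ) < #{q | g q < c} := by
  constructor
  · intro hp
    have hsub : Iic p ⊆ ({q | g q < c} : Finset (Fin n)) := fun q hq =>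
      mem_filter.2 ⟨mem_univ q, (hg (mem_Iic.1 hq)).trans_lt hp⟩
    simpa [Fin.card_Iic] using card_le_card hsub
  · intro hp
    by_contra hcp
    have hsub : ({q | g q < c} : Finset (Fin n)) ⊆ Iio p := fun q hq =>
      mem_Iio.2 (lt_of_not_ge fun hpq => hcp ((hg hpq).trans_lt (mem_filter.1 hq).2))
    exact absurd (card_le_card hsub) (by simpa [Fin.card_Iio] using hp)

theorem Fin.card_filter_eq_iff {P : Fin n → Prop} [DecidablePred P] :
    #{v | P v} = n ↔ ∀ v, P v := by
  simpa using Finset.card_filter_eq_iff (s := (univ : Finset (Fin n))) (p := P)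

theorem card_filter_forall_lt {m : ℕ} (c : Fin m) :
    #{f : Fin n → Fin m | ∀ v, f v < c} = (c : ℕ) ^ n := by
  have : ({f : Fin n → Fin m | ∀ v, f v < c} : Finset _) = Fintype.piFinset fun _ => Iio c := by
    ext f; simp [Fintype.mem_piFinset]
  rw [this, Fintype.card_piFinset_const, Fin.card_Iio]

end Fin

section Cuts

variable {n i j : ℕ}

def cutBlock (i j : ℕ) (p : Fin n) : Fin 3 :=
  if (p : ℕ) < i then 0 else if (p : ℕ) < j then 1 else 2

def cutType (f : Fin n → Fin 3) : ℕ × ℕ := (#{v | f v < 1}, #{v | f v < 2})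

def cutPairs (n : ℕ) : Finset (ℕ × ℕ) := {c ∈ range (n + 1) ×ˢ range (n + 1) | c.1 ≤ c.2}

-- `σ` increases on each of the blocks `[0, i)`, `[i, j)`, `[j, n)`.
def FitsCut (σ : Equiv.Perm (Fin n)) (i j : ℕ) : Prop :=
  StrictMono fun p => toLex (cutBlock i j p, σ p)

instance (i j : ℕ) : DecidablePred fun σ : Equiv.Perm (Fin n) => FitsCut σ i j :=
  fun σ => by unfold FitsCut StrictMono; infer_instance

theorem cutBlock_lt_one_iff (p : Fin n) : cutBlock i j p < 1 ↔ (p : ℕ) < i := by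
  unfold cutBlock; split_ifs <;> simp_all

theorem cutBlock_lt_two_iff (hij : i ≤ j) (p : Fin n) : cutBlock i j p < 2 ↔ (p : ℕ) < j := by
  unfold cutBlock; split_ifs <;> simp_all [Fin.lt_def]; omega

theorem monotone_cutBlock : Monotone (cutBlock (n := n) i j) := by
  intro p q hpq
  rw [Fin.le_def] at hpq
  unfold cutBlock; split_ifs <;> simp [Fin.le_def] <;> omega

theorem cutBlock_preimage (ix : Fin 4 → ℕ) (hix : Monotone ix) (h0 : ix 0 = 0)
    (h3 : ix 3 = n) (k : Fin 3) :
    cutBlock (ix 1) (ix 2) ⁻¹' {k} = {p : Fin n | ix k.castSucc ≤ p ∧ (p : ℕ) < ix k.succ} := by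
  have h12 : ix 1 ≤ ix 2 := hix (by decide)
  ext p
  have := p.isLt
  fin_cases k <;> simp [cutBlock, h0, h3] <;> split_ifs <;> simp <;> omega

theorem cutType_fst_le_snd (f : Fin n → Fin 3) : (cutType f).1 ≤ (cutType f).2 := by
  dsimp only [cutType]
  refine card_le_card fun v hv => ?_
  simp only [mem_filter] at hv ⊢
  exact ⟨hv.1, hv.2.trans (by decide)⟩

theorem cutType_mem_cutPairs (f : Fin n → Fin 3) : cutType f ∈ cutPairs n := by
  have hle : (cutType f).2 ≤ n := (card_filter_le _ _).trans (card_fin n).le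
  have := cutType_fst_le_snd f
  simp only [cutPairs, mem_filter, mem_product, mem_range]
  omega

theorem cutType_comp_perm (f : Fin n → Fin 3) (σ : Equiv.Perm (Fin n)) :
    cutType (f ∘ σ) = cutType f := by
  simp only [cutType, Prod.mk.injEq]
  constructor <;> exact card_equiv σ (by simp)

theorem cutType_cutBlock (hij : i ≤ j) (hjn : j ≤ n) :
    cutType (cutBlock (n := n) i j) = (i, j) := by
  simp only [cutType, cutBlock_lt_one_iff, cutBlock_lt_two_iff hij, Fin.card_filter_val_lt]
  congr 1 <;> omega

theorem cutType_snd_eq_iff_forall_lt_two (f : Fin n → Fin 3) :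
    (cutType f).2 = n ↔ ∀ v, f v < 2 :=
  Fin.card_filter_eq_iff

theorem cutType_eq_iff_forall_lt_one (f : Fin n → Fin 3) :
    cutType f = (n, n) ↔ ∀ v, f v < 1 := by
  simp only [cutType, Prod.mk.injEq, Fin.card_filter_eq_iff]
  exact ⟨And.left, fun h => ⟨h, fun v => (h v).trans (by decide)⟩⟩

theorem eq_cutBlock_of_monotone {g : Fin n → Fin 3} (hg : Monotone g) :
    g = cutBlock (cutType g).1 (cutType g).2 := by
  funext p
  have fin3_ext : ∀ x y : Fin 3, (x < 1 ↔ y < 1) → (x < 2 ↔ y < 2) → x = y := by decide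
  refine fin3_ext _ _ ?_ ?_
  · rw [cutBlock_lt_one_iff]; exact hg.lt_iff_lt_card_filter 1 p
  · rw [cutBlock_lt_two_iff (cutType_fst_le_snd g)]; exact hg.lt_iff_lt_card_filter 2 p

theorem card_filter_fitsCut_eq (hij : i ≤ j) (hjn : j ≤ n) :
    #{σ : Equiv.Perm (Fin n) | FitsCut σ i j} = #{f : Fin n → Fin 3 | cutType f = (i, j)} := by
  refine card_nbij (fun σ => cutBlock i j ∘ σ.symm) ?_ ?_ ?_
  · intro σ _
    simp only [mem_coe, mem_filter, mem_univ, true_and]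
    rw [cutType_comp_perm, cutType_cutBlock hij hjn]
  · intro σ hσ τ hτ (hστ : cutBlock i j ∘ σ.symm = cutBlock i j ∘ τ.symm)
    simp only [mem_coe, mem_filter, mem_univ, true_and] at hσ hτ
    refine (existsUnique_perm_strictMono_toLex (cutBlock i j ∘ τ.symm)).unique ?_ ?_
    · have h : ∀ p, (cutBlock i j ∘ τ.symm) (σ p) = cutBlock i j p := fun p => by
        rw [← hστ]; simp
      simp only [h]
      exact hσ
    · simp only [Function.comp_apply, Equiv.symm_apply_apply]
      exact hτ
  · intro f hf
    simp only [mem_coe, mem_filter, mem_univ, true_and] at hf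
    obtain ⟨σ, hσ, -⟩ := existsUnique_perm_strictMono_toLex f
    have hfσ : f ∘ σ = cutBlock i j := by
      rw [eq_cutBlock_of_monotone (monotone_of_strictMono_toLex (b := f ∘ σ) hσ),
        cutType_comp_perm, hf]
    refine ⟨σ, ?_, ?_⟩
    · simp only [mem_coe, mem_filter, mem_univ, true_and, FitsCut, ← hfσ]
      exact hσ
    · rw [← hfσ]; ext; simp

theorem sum_card_filter_fitsCut :
    ∑ c ∈ cutPairs n, #{σ : Equiv.Perm (Fin n) | FitsCut σ c.1 c.2} = 3 ^ n := by
  have h : ∀ c ∈ cutPairs n, #{σ : Equiv.Perm (Fin n) | FitsCut σ c.1 c.2} =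
      #{f : Fin n → Fin 3 | cutType f = c} := fun c hc => by
    simp only [cutPairs, mem_filter, mem_product, mem_range] at hc
    exact card_filter_fitsCut_eq hc.2 (by omega)
  rw [sum_congr rfl h, ← card_eq_sum_card_fiberwise fun f _ => cutType_mem_cutPairs f, card_univ,
    Fintype.card_fun, Fintype.card_fin, Fintype.card_fin]

theorem sum_card_filter_fitsCut_last :
    ∑ i ∈ range (n + 1), #{σ : Equiv.Perm (Fin n) | FitsCut σ i n} = 2 ^ n := by
  have h : ∀ i ∈ range (n + 1), #{σ : Equiv.Perm (Fin n) | FitsCut σ i n} =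
      #{f ∈ {f : Fin n → Fin 3 | (cutType f).2 = n} | (cutType f).1 = i} := fun i hi => by
    rw [card_filter_fitsCut_eq (by simpa [Nat.lt_succ_iff] using hi) le_rfl, filter_filter]
    simp only [Prod.ext_iff, and_comm]
  rw [sum_congr rfl h, ← card_eq_sum_card_fiberwise]
  · simp only [cutType_snd_eq_iff_forall_lt_two]
    exact card_filter_forall_lt 2
  · intro f hf
    simp only [mem_coe, mem_filter, mem_univ, true_and] at hf
    simpa [Nat.lt_succ_iff, ← hf] using cutType_fst_le_snd f

theorem card_filter_fitsCut_last_last : #{σ : Equiv.Perm (Fin n) | FitsCut σ n n} = 1 := by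
  rw [card_filter_fitsCut_eq le_rfl le_rfl]
  simp only [cutType_eq_iff_forall_lt_one]
  simpa using card_filter_forall_lt (n := n) (1 : Fin 3)

end Cuts

section Descents

variable {n i j : ℕ}

-- A descent is recorded at the position `q` of the smaller entry, where a new block must start.
def descents (σ : Equiv.Perm (Fin n)) : Finset ℕ :=
  ({q : Fin n | ∃ p : Fin n, (q : ℕ) = p + 1 ∧ σ q < σ p} : Finset (Fin n)).image Fin.val

theorem descents_subset_range (σ : Equiv.Perm (Fin n)) : descents σ ⊆ range n := by
  intro c hc
  obtain ⟨q, -, rfl⟩ := mem_image.1 hc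
  exact mem_range.2 q.isLt

theorem cutBlock_eq_cutBlock_iff (hij : i ≤ j) {p q : Fin n} (hq : (q : ℕ) = p + 1) :
    cutBlock i j p = cutBlock i j q ↔ (q : ℕ) ≠ i ∧ (q : ℕ) ≠ j := by
  unfold cutBlock; split_ifs <;> simp <;> omega

theorem fitsCut_iff_descents_subset {σ : Equiv.Perm (Fin n)} (hij : i ≤ j) :
    FitsCut σ i j ↔ descents σ ⊆ {i, j} := by
  have step : ∀ p q : Fin n, (q : ℕ) = p + 1 →
      (toLex (cutBlock i j p, σ p) < toLex (cutBlock i j q, σ q) ↔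
        (σ q < σ p → (q : ℕ) = i ∨ (q : ℕ) = j)) := by
    intro p q hq
    have hne : σ p ≠ σ q := σ.injective.ne (by rintro rfl; omega)
    rw [Prod.Lex.toLex_lt_toLex', cutBlock_eq_cutBlock_iff hij hq,
      and_iff_right (monotone_cutBlock (Fin.le_def.2 (by omega))), ← hne.le_iff_lt, ← not_lt]
    tauto
  simp only [FitsCut, Fin.strictMono_iff_lt_of_val_eq_succ, descents, image_subset_iff,
    mem_filter, mem_univ, true_and, mem_insert, mem_singleton]
  constructor
  · rintro h q ⟨p, hq, hlt⟩
    exact (step p q hq).1 (h p q hq) hlt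
  · intro h p q hq
    exact (step p q hq).2 fun hlt => h q ⟨p, hq, hlt⟩

end Descents

section CountingCuts

variable {n : ℕ}

theorem card_cutPairs (n : ℕ) : #(cutPairs n) * 2 = (n + 1) * (n + 2) := by
  have fibre : ∀ j ∈ range (n + 1), #{c ∈ cutPairs n | c.2 = j} = j + 1 := by
    intro j hj
    rw [mem_range] at hj
    have : ({c ∈ cutPairs n | c.2 = j} : Finset _) = range (j + 1) ×ˢ {j} := by
      ext ⟨a, b⟩; simp [cutPairs]; omega
    rw [this, card_product, card_range, card_singleton, mul_one]
  rw [card_eq_sum_card_fiberwise (f := Prod.snd) (t := range (n + 1))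
    fun c hc => by simp only [cutPairs, mem_coe, mem_filter, mem_product] at hc; exact hc.1.2,
    sum_congr rfl fibre]
  have gauss := sum_range_id_mul_two (n + 2)
  rw [sum_range_succ'] at gauss
  rw [← add_zero (∑ j ∈ range (n + 1), (j + 1)), gauss, show n + 2 - 1 = n + 1 by omega]
  ring

theorem card_filter_cutPairs_singleton_subset {d : ℕ} (hd : d < n) :
    #{c ∈ cutPairs n | {d} ⊆ ({c.1, c.2} : Finset ℕ)} = n + 1 := by
  have : ({c ∈ cutPairs n | {d} ⊆ ({c.1, c.2} : Finset ℕ)} : Finset _) =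
      (range (n + 1)).image fun k => (min k d, max k d) := by
    ext ⟨a, b⟩
    simp only [cutPairs, mem_filter, mem_product, mem_range, singleton_subset_iff, mem_insert,
      mem_singleton, mem_image, Prod.mk.injEq]
    constructor
    · rintro ⟨⟨⟨ha, hb⟩, hab⟩, rfl | rfl⟩
      · exact ⟨b, hb, by omega, by omega⟩
      · exact ⟨a, ha, by omega, by omega⟩
    · rintro ⟨k, hk, rfl, rfl⟩
      omega
  rw [this, card_image_of_injOn, card_range]
  intro k _ k' _ h
  simp only [Prod.mk.injEq] at h
  omega

theorem filter_cutPairs_pair_subset {d e : ℕ} (hde : d ≠ e) (hd : d < n) (he : e < n) :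
    ({c ∈ cutPairs n | {d, e} ⊆ ({c.1, c.2} : Finset ℕ)} : Finset _) = {(min d e, max d e)} := by
  ext ⟨a, b⟩
  simp [cutPairs, insert_subset_iff]
  omega

theorem boole_exists_cut_add_mul_card_eq (D : Finset ℕ) (hD : D ⊆ range n) :
    (if ∃ c ∈ cutPairs n, D ⊆ {c.1, c.2} then 1 else 0) +
        n * #{i ∈ range (n + 1) | D ⊆ {i, n}} =
      #{c ∈ cutPairs n | D ⊆ {c.1, c.2}} + n.choose 2 * (if D ⊆ {n, n} then 1 else 0) := by
  have hlt : ∀ d ∈ D, d < n := fun d hd => mem_range.1 (hD hd)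
  obtain hD0 | hD1 | hD2 | hD3 : #D = 0 ∨ #D = 1 ∨ #D = 2 ∨ 2 < #D := by omega
  · rw [card_eq_zero.1 hD0]
    simp only [empty_subset, if_true, and_true, filter_true, card_range, mul_one]
    rw [if_pos ⟨(0, 0), by simp [cutPairs]⟩]
    have hP := card_cutPairs n
    have hC : n.choose 2 * 2 = n * (n - 1) := by
      rw [Nat.choose_two_right]; exact Nat.div_mul_cancel (Nat.even_mul_pred_self n).two_dvd
    cases n with
    | zero => simp [cutPairs]; decide
    | succ m => simp only [Nat.add_sub_cancel] at hC; nlinarith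
  · obtain ⟨d, rfl⟩ := card_eq_one.1 hD1
    have hd := hlt d (mem_singleton_self d)
    have hS : ({i ∈ range (n + 1) | {d} ⊆ ({i, n} : Finset ℕ)} : Finset ℕ) = {d} := by
      ext i; simp; omega
    rw [if_pos ⟨(d, d), by simp [cutPairs]; omega, by simp⟩, hS,
      card_filter_cutPairs_singleton_subset hd, if_neg (by simp; omega)]
    simp [add_comm]
  · obtain ⟨d, e, hde, rfl⟩ := card_eq_two.1 hD2
    have hd := hlt d (by simp)
    have he := hlt e (by simp)
    have hS : ({i ∈ range (n + 1) | {d, e} ⊆ ({i, n} : Finset ℕ)} : Finset ℕ) = ∅ := by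
      ext i; simp [insert_subset_iff]; omega
    rw [if_pos ⟨(min d e, max d e), by simp [cutPairs]; omega, by simp [insert_subset_iff]; omega⟩,
      hS, filter_cutPairs_pair_subset hde hd he,
      if_neg fun h => absurd (h (mem_insert_self d _)) (by simp; omega)]
    simp
  · have hno : ∀ a b : ℕ, ¬ D ⊆ {a, b} := fun a b h =>
      absurd ((card_le_card h).trans (card_insert_le a {b})) (by simp; omega)
    rw [if_neg fun ⟨c, _, hc⟩ => hno _ _ hc, if_neg (hno n n),
      filter_false_of_mem fun _ _ => hno _ _, filter_false_of_mem fun _ _ => hno _ _]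
    simp

theorem card_filter_exists_fitsCut_add (n : ℕ) :
    #{σ : Equiv.Perm (Fin n) | ∃ c ∈ cutPairs n, FitsCut σ c.1 c.2} + n * 2 ^ n =
      3 ^ n + n.choose 2 := by
  have card_eq {i j : ℕ} (hij : i ≤ j) : #{σ : Equiv.Perm (Fin n) | descents σ ⊆ {i, j}} =
      #{σ : Equiv.Perm (Fin n) | FitsCut σ i j} :=
    congrArg card (filter_congr fun σ _ => (fitsCut_iff_descents_subset hij).symm)
  have swap {β : Type} (t : Finset β) (r : Equiv.Perm (Fin n) → β → Prop) [DecidableRel r] :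
      ∑ σ, #{b ∈ t | r σ b} = ∑ b ∈ t, #{σ | r σ b} := by
    simp only [card_filter]; exact sum_comm
  calc #{σ : Equiv.Perm (Fin n) | ∃ c ∈ cutPairs n, FitsCut σ c.1 c.2} + n * 2 ^ n
      = ∑ σ : Equiv.Perm (Fin n), ((if ∃ c ∈ cutPairs n, descents σ ⊆ {c.1, c.2} then 1 else 0) +
          n * #{i ∈ range (n + 1) | descents σ ⊆ {i, n}}) := by
        rw [sum_add_distrib, ← mul_sum, card_filter, swap,
          sum_congr rfl fun i hi => card_eq (Nat.lt_succ_iff.1 (mem_range.1 hi)),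
          sum_card_filter_fitsCut_last]
        refine congrArg (· + _) (sum_congr rfl fun σ _ => if_congr ?_ rfl rfl)
        exact exists_congr fun c =>
          and_congr_right fun hc => fitsCut_iff_descents_subset (mem_filter.1 hc).2
    _ = ∑ σ : Equiv.Perm (Fin n), (#{c ∈ cutPairs n | descents σ ⊆ {c.1, c.2}} +
          n.choose 2 * if descents σ ⊆ {n, n} then 1 else 0) :=
        sum_congr rfl fun σ _ => boole_exists_cut_add_mul_card_eq _ (descents_subset_range σ)
    _ = 3 ^ n + n.choose 2 := by
        rw [sum_add_distrib, ← mul_sum, swap,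
          sum_congr rfl fun c (hc : c ∈ cutPairs n) => card_eq (mem_filter.1 hc).2,
          sum_card_filter_fitsCut, sum_boole, card_eq le_rfl, card_filter_fitsCut_last_last]
        simp

end CountingCuts

section GridClass

theorem contains_p21_iff (τ : Perm') :
    Contains τ p21 ↔ ∃ p q : Fin τ.1, p < q ∧ τ.2 q < τ.2 p := by
  simp only [Contains, p21]
  constructor
  · rintro ⟨f, hf, hiff⟩
    exact ⟨f 0, f 1, hf (by decide), (hiff 1 0).1 (by decide)⟩
  · rintro ⟨p, q, hpq, hqp⟩
    refine ⟨![p, q], fun x y hxy => ?_, fun x y => ?_⟩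
    · fin_cases x <;> fin_cases y <;> simp_all
    · fin_cases x <;> fin_cases y <;> simp [hqp, hqp.not_gt] <;> decide

theorem mem_Av_p21_iff (τ : Perm') : τ ∈ Av {p21} ↔ StrictMono τ.2 := by
  simp only [Av, Set.mem_ofPred_eq, Set.mem_singleton_iff, forall_eq, contains_p21_iff,
    not_exists, not_and, not_lt]
  exact ⟨fun h => (monotone_iff_forall_lt.2 fun p q => h p q).strictMono_of_injective
    τ.2.injective, fun h p q hpq => (h hpq).le⟩

theorem patternIn_Av_p21_iff (π : Perm') (a b : ℕ) :
    PatternIn π a b (Av {p21} ∪ emptyPerms) ↔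
      b ≤ π.1 ∧ StrictMonoOn π.2 {p | a ≤ (p : ℕ) ∧ (p : ℕ) < b} := by
  constructor
  · rintro ⟨τ, ⟨hb, hτ, hiff⟩, hmem⟩
    have hτmono : StrictMono τ.2 := by
      rcases hmem with hmem | (hmem : τ.1 = 0)
      · exact (mem_Av_p21_iff τ).1 hmem
      · exact fun p => absurd p.isLt (by omega)
    refine ⟨hb, fun p ⟨hap, hpb⟩ q ⟨haq, hqb⟩ hpq => ?_⟩
    have := (hiff ⟨p - a, by omega⟩ ⟨q - a, by omega⟩).1
      (hτmono (Fin.mk_lt_mk.2 (by rw [Fin.lt_def] at hpq; omega)))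
    convert this using 2 <;> congr 1 <;> ext <;> simp <;> omega
  · rintro ⟨hb, hmono⟩
    have hg : StrictMono fun i : Fin (b - a) => π.2 ⟨a + i, by omega⟩ := fun i j hij =>
      hmono ⟨by simp, by simp; omega⟩ ⟨by simp, by simp; omega⟩
        (Fin.mk_lt_mk.2 (by rw [Fin.lt_def] at hij; omega))
    exact ⟨⟨b - a, 1⟩, ⟨hb, rfl, fun i j => hg.lt_iff_lt.symm⟩,
      Or.inl ((mem_Av_p21_iff _).2 strictMono_id)⟩

theorem mem_gridClass_iff (π : Perm') :
    π ∈ GridClass ![Av {p21}, Av {p21}, Av {p21}] ↔ ∃ c ∈ cutPairs π.1, FitsCut π.2 c.1 c.2 := by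
  have fits_iff {ix : Fin 4 → ℕ} (hix : Monotone ix) (h0 : ix 0 = 0) (h3 : ix 3 = π.1) :
      FitsCut π.2 (ix 1) (ix 2) ↔
        ∀ k : Fin 3, StrictMonoOn π.2 {p | ix k.castSucc ≤ (p : ℕ) ∧ (p : ℕ) < ix k.succ} := by
    rw [FitsCut, strictMono_toLex_iff_forall_strictMonoOn monotone_cutBlock]
    simp only [cutBlock_preimage ix hix h0 h3]
  constructor
  · rintro ⟨ix, hix, h0, h3, hk⟩
    have hpat : ∀ k : Fin 3, PatternIn π (ix k.castSucc) (ix k.succ) (Av {p21} ∪ emptyPerms) := by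
      intro k; fin_cases k <;> exact hk _
    refine ⟨(ix 1, ix 2), ?_, (fits_iff hix h0 h3).2 fun k =>
      ((patternIn_Av_p21_iff π _ _).1 (hpat k)).2⟩
    have h12 : ix 1 ≤ ix 2 := hix (by decide)
    have h23 : ix 2 ≤ ix 3 := hix (by decide)
    change ix 3 = π.1 at h3
    simp only [cutPairs, mem_filter, mem_product, mem_range]
    omega
  · rintro ⟨c, hc, hfits⟩
    simp only [cutPairs, mem_filter, mem_product, mem_range] at hc
    have hix : Monotone ![0, c.1, c.2, π.1] :=
      Fin.monotone_iff_le_succ.2 fun k => by fin_cases k <;> simp <;> omega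
    refine ⟨![0, c.1, c.2, π.1], hix, rfl, rfl, fun k => ?_⟩
    fin_cases k <;>
      exact (patternIn_Av_p21_iff π _ _).2 ⟨hix (Fin.le_last _), (fits_iff hix rfl rfl).1 hfits _⟩

theorem ncard_setOf_mem_and_fst_eq (S : Set Perm') (n : ℕ) :
    {π : Perm' | π ∈ S ∧ π.1 = n}.ncard = {σ : Equiv.Perm (Fin n) | ⟨n, σ⟩ ∈ S}.ncard := by
  have : {π : Perm' | π ∈ S ∧ π.1 = n} = Sigma.mk n '' {σ | ⟨n, σ⟩ ∈ S} := by
    ext ⟨m, σ⟩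
    constructor
    · rintro ⟨hσ, rfl : m = n⟩
      exact ⟨σ, hσ, rfl⟩
    · rintro ⟨τ, hτ, h⟩
      obtain ⟨rfl, rfl⟩ := Sigma.mk.inj_iff.1 h
      exact ⟨hτ, rfl⟩
  rw [this, Set.ncard_image_of_injective _ sigma_mk_injective]

end GridClass

section GeneratingFunction

open PowerSeries

variable {R : Type*} [CommRing R]

theorem PowerSeries.one_sub_C_mul_X_mul_mk_pow (c : R) :
    (1 - C c * X) * mk (fun n => c ^ n) = 1 := by
  have h := congrArg (rescale c) (mk_one_mul_one_sub_eq_one R)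
  simp only [map_mul, map_sub, map_one, rescale_X, rescale_mk, Pi.one_apply, mul_one] at h
  rwa [mul_comm] at h

theorem PowerSeries.X_mul_mk_one_sq : X * (mk 1 : R⟦X⟧) ^ 2 = mk fun n => (n : R) := by
  rw [show 2 = 1 + 1 from rfl, mk_one_pow_eq_mk_choose_add]
  ext (_ | k) <;> simp [coeff_succ_X_mul, add_comm]

theorem PowerSeries.one_sub_C_mul_X_sq_mul_mk_mul_pow (c : R) :
    (1 - C c * X) ^ 2 * mk (fun n => n * c ^ n) = C c * X := by
  have h := congrArg (rescale c) (congrArg (X * · ^ 2) (mk_one_mul_one_sub_eq_one R))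
  simp only [mul_pow, one_pow, mul_one, ← mul_assoc, X_mul_mk_one_sq, map_mul, map_pow, map_sub,
    map_one, rescale_X, rescale_mk] at h
  rw [mul_comm]
  convert h using 2
  exact funext fun n => mul_comm _ _

theorem PowerSeries.one_sub_X_pow_three_mul_mk_choose_two :
    (1 - X) ^ 3 * mk (fun n => (n.choose 2 : R)) = X ^ 2 := by
  have hmk : X ^ 2 * (mk 1 : R⟦X⟧) ^ 3 = mk fun n => (n.choose 2 : R) := by
    rw [show 3 = 2 + 1 from rfl, mk_one_pow_eq_mk_choose_add]
    ext k
    rw [coeff_X_pow_mul', coeff_mk, coeff_mk]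
    split_ifs with hk
    · rw [Nat.add_sub_cancel' hk]
    · rw [Nat.choose_eq_zero_of_lt (by omega), Nat.cast_zero]
  rw [← hmk, mul_left_comm, ← mul_pow, mul_comm _ (mk 1), mk_one_mul_one_sub_eq_one, one_pow,
    mul_one]

end GeneratingFunction

theorem gf_gridClass :
    gf (GridClass ![Av {p21}, Av {p21}, Av {p21}]) =
      PowerSeries.mk (fun n => (3 : ℚ) ^ n) - PowerSeries.mk (fun n => (n : ℚ) * 2 ^ n) +
        PowerSeries.mk (fun n => (n.choose 2 : ℚ)) := by
  ext n
  have hset : {σ : Equiv.Perm (Fin n) |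
      (⟨n, σ⟩ : Perm') ∈ GridClass ![Av {p21}, Av {p21}, Av {p21}]} =
      ↑({σ | ∃ c ∈ cutPairs n, FitsCut σ c.1 c.2} : Finset (Equiv.Perm (Fin n))) := by
    ext σ
    simp [mem_gridClass_iff]
  simp only [gf, map_add, map_sub, PowerSeries.coeff_mk, ncard_setOf_mem_and_fst_eq, hset,
    Set.ncard_coe_finset]
  have hcount : (#{σ : Equiv.Perm (Fin n) | ∃ c ∈ cutPairs n, FitsCut σ c.1 c.2} : ℚ) +
      n * 2 ^ n = 3 ^ n + n.choose 2 := by exact_mod_cast card_filter_exists_fitsCut_add n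
  linear_combination hcount

theorem gf_gridClass_mul_eq :
    (1 - PowerSeries.X) ^ 3 * (1 - 2 * PowerSeries.X) ^ 2 * (1 - 3 * PowerSeries.X) *
        gf (GridClass ![Av {p21}, Av {p21}, Av {p21}]) =
      (1 - PowerSeries.X) ^ 2 * (1 - 2 * PowerSeries.X) ^ 2 * (1 - 3 * PowerSeries.X) +
        PowerSeries.X ^ 2 * (1 - PowerSeries.X) * (1 - 2 * PowerSeries.X) *
          (1 - 3 * PowerSeries.X) +
        PowerSeries.X ^ 3 * (1 + PowerSeries.X - 4 * PowerSeries.X ^ 2) := by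
  have h3 := PowerSeries.one_sub_C_mul_X_mul_mk_pow (3 : ℚ)
  have h2 := PowerSeries.one_sub_C_mul_X_sq_mul_mk_mul_pow (2 : ℚ)
  have h1 := PowerSeries.one_sub_X_pow_three_mul_mk_choose_two (R := ℚ)
  rw [map_ofNat] at h3 h2
  rw [gf_gridClass]
  linear_combination (1 - PowerSeries.X) ^ 3 * (1 - 2 * PowerSeries.X) ^ 2 * h3 -
    (1 - PowerSeries.X) ^ 3 * (1 - 3 * PowerSeries.X) * h2 +
    (1 - 2 * PowerSeries.X) ^ 2 * (1 - 3 * PowerSeries.X) * h1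

/-- the generating function `F` of `Av(21) | Av(21) | Av(21)` satisfies
`(1−z)³(1−2z)²(1−3z)·F = (1−z)²(1−2z)²(1−3z) + z²(1−z)(1−2z)(1−3z) + z³(1+z−4z²)`;
in particular `F` is rational. -/
theorem stmt13 (F : PowerSeries ℚ)
    (hF : F = gf (GridClass ![Av {p21}, Av {p21}, Av {p21}])) :
    (1 - PowerSeries.X) ^ 3 * (1 - 2 * PowerSeries.X) ^ 2 *
        (1 - 3 * PowerSeries.X) * F =
      (1 - PowerSeries.X) ^ 2 * (1 - 2 * PowerSeries.X) ^ 2 *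
          (1 - 3 * PowerSeries.X) +
        PowerSeries.X ^ 2 * (1 - PowerSeries.X) * (1 - 2 * PowerSeries.X) *
          (1 - 3 * PowerSeries.X) +
        PowerSeries.X ^ 3 *
          (1 + PowerSeries.X - 4 * PowerSeries.X ^ 2) ∧
    IsRationalPS F := by
  subst hF
  refine ⟨gf_gridClass_mul_eq, (1 - Polynomial.X) ^ 2 * (1 - 2 * Polynomial.X) ^ 2 *
      (1 - 3 * Polynomial.X) + Polynomial.X ^ 2 * (1 - Polynomial.X) * (1 - 2 * Polynomial.X) *
      (1 - 3 * Polynomial.X) + Polynomial.X ^ 3 * (1 + Polynomial.X - 4 * Polynomial.X ^ 2),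
    (1 - Polynomial.X) ^ 3 * (1 - 2 * Polynomial.X) ^ 2 * (1 - 3 * Polynomial.X), ?_, ?_⟩
  · simp [Polynomial.coeff_zero_eq_eval_zero]
  · simp only [← Polynomial.coeToPowerSeries.ringHom_apply, map_add, map_sub, map_mul, map_pow,
      map_one, map_ofNat]
    simpa only [Polynomial.coeToPowerSeries.ringHom_apply, Polynomial.coe_X] using
      gf_gridClass_mul_eq
end
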